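/- Fix an integer k ≥ 0, a natural number n ≥ 1, and complex numbers y, a with y ≠ 0 and y² ≠ a. Then the Dickson polynomial of the (k+1)-th kind satisfies the functional equation D_{n,k}(y + a/y, a) = (y^{2n} + aⁿ)/yⁿ + (k·a/yⁿ) · (y^{2n} − a^{n−1}·y²)/(y² − a). -/
import Mathlib


/-- The `n`-th Dickson polynomial of the `(k+1)`-th kind, evaluated at `x` with
parameter `a`: `D_{0,k}(x,a) = 2 − k` and, for `n ≥ 1`,
`D_{n,k}(x,a) = Σ_{i=0}^{⌊n/2⌋} ((n − k·i)/(n − i)) · C(n−i,i) · (−a)^i · x^(n−2i)`. -/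
noncomputable def dicksonKind (k n : ℕ) (x a : ℂ) : ℂ :=
  if n = 0 then 2 - (k : ℂ)
  else ∑ i ∈ Finset.range (n / 2 + 1),
    (((n : ℂ) - (k : ℂ) * (i : ℂ)) / ((n : ℂ) - (i : ℂ))) * (Nat.choose (n - i) i : ℂ) *
      (-a) ^ i * x ^ (n - 2 * i)


lemma coeff_rec (k n i : ℕ) (hn : 1 ≤ n) (hi : 2*i ≤ n) :
    ((n:ℂ) + 2 - (k:ℂ)*((i:ℂ)+1)) / ((n:ℂ) + 2 - ((i:ℂ)+1)) * ((Nat.choose (n+1-i) (i+1) : ℕ) : ℂ)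
    = ((n:ℂ) + 1 - (k:ℂ)*((i:ℂ)+1)) / ((n:ℂ) + 1 - ((i:ℂ)+1)) * ((Nat.choose (n-i) (i+1) : ℕ) : ℂ)
      + ((n:ℂ) - (k:ℂ)*(i:ℂ)) / ((n:ℂ) - (i:ℂ)) * ((Nat.choose (n-i) i : ℕ) : ℂ) := by
  have hin : i < n := by omega
  have hni : ((n - i : ℕ) : ℂ) = (n:ℂ) - (i:ℂ) := by push_cast [Nat.cast_sub hin.le]; ring
  have d1 : (n:ℂ) + 2 - ((i:ℂ)+1) ≠ 0 := by
    have e : (n:ℂ) + 2 - ((i:ℂ)+1) = ((n - i : ℕ) : ℂ) + 1 := by rw [hni]; ring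
    rw [e]; exact Nat.cast_add_one_ne_zero (n-i)
  have d2 : (n:ℂ) + 1 - ((i:ℂ)+1) ≠ 0 := by
    have e : (n:ℂ) + 1 - ((i:ℂ)+1) = ((n - i : ℕ) : ℂ) := by rw [hni]; ring
    rw [e]; exact Nat.cast_ne_zero.mpr (by omega)
  have d3 : (n:ℂ) - (i:ℂ) ≠ 0 := by rw [← hni]; exact Nat.cast_ne_zero.mpr (by omega)
  have h1 : ((Nat.choose (n+1-i) (i+1) : ℕ) : ℂ)
      = ((Nat.choose (n-i) i : ℕ) : ℂ) + ((Nat.choose (n-i) (i+1) : ℕ) : ℂ) := by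
    have e : n + 1 - i = (n - i) + 1 := by omega
    rw [e, Nat.choose_succ_succ]; push_cast; ring
  have h3 : ((Nat.choose (n-i) (i+1) : ℕ) : ℂ) * ((i:ℂ)+1)
      = ((Nat.choose (n-i) i : ℕ) : ℂ) * ((n:ℂ) - 2*(i:ℂ)) := by
    have h := Nat.choose_succ_right_eq (n-i) i
    have e : n - i - i = n - 2*i := by omega
    rw [e] at h
    have hc : ((Nat.choose (n-i) (i+1) * (i+1) : ℕ) : ℂ)
        = ((Nat.choose (n-i) i * (n - 2*i) : ℕ) : ℂ) := by exact_mod_cast h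
    push_cast [Nat.cast_sub hi] at hc
    convert hc using 2
  rw [div_mul_eq_mul_div, div_mul_eq_mul_div, div_mul_eq_mul_div,
    div_add_div _ _ d2 d3, div_eq_div_iff d1 (mul_ne_zero d2 d3)]
  linear_combination ((n:ℂ) + 2 - (k:ℂ)*((i:ℂ)+1)) * ((n:ℂ) - (i:ℂ))^2 * h1
    + ((n:ℂ) - (i:ℂ)) * ((k:ℂ) - 1) * h3

lemma dickson_rec (k : ℕ) (x a : ℂ) (n : ℕ) (hn : 1 ≤ n) :
    dicksonKind k (n+2) x a = x * dicksonKind k (n+1) x a - a * dicksonKind k n x a := by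
  simp only [dicksonKind, if_neg (show ¬(n+2=0) by omega), if_neg (show ¬(n+1=0) by omega),
    if_neg (show ¬(n=0) by omega)]
  have hr2 : (n+2)/2 + 1 = n/2 + 1 + 1 := by omega
  rw [hr2]
  have hext : (∑ i ∈ Finset.range ((n+1)/2 + 1),
        (((n+1 : ℕ) : ℂ) - (k : ℂ) * (i : ℂ)) / (((n+1 : ℕ) : ℂ) - (i : ℂ)) *
          (Nat.choose (n+1 - i) i : ℂ) * (-a) ^ i * x ^ (n+1 - 2 * i))
      = ∑ i ∈ Finset.range (n/2 + 1 + 1),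
        (((n+1 : ℕ) : ℂ) - (k : ℂ) * (i : ℂ)) / (((n+1 : ℕ) : ℂ) - (i : ℂ)) *
          (Nat.choose (n+1 - i) i : ℂ) * (-a) ^ i * x ^ (n+1 - 2 * i) := by
    apply Finset.sum_subset
    · exact Finset.range_subset_range.2 (by omega)
    · intro j hj hj2
      simp only [Finset.mem_range] at hj hj2
      have hlt : n + 1 - j < j := by omega
      simp [Nat.choose_eq_zero_of_lt hlt]
  rw [hext, Finset.mul_sum, Finset.mul_sum]
  conv_lhs => rw [Finset.sum_range_succ']
  conv_rhs => rw [Finset.sum_range_succ']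
  rw [add_sub_right_comm, ← Finset.sum_sub_distrib]
  congr 1
  · refine Finset.sum_congr rfl fun i hi => ?_
    simp only [Finset.mem_range] at hi
    have h2i : 2*i ≤ n := by omega
    have e1 : n + 2 - (i+1) = n + 1 - i := by omega
    have e3 : n + 1 - (i+1) = n - i := by omega
    rw [e1, e3]
    have hc := coeff_rec k n i hn h2i
    rcases eq_or_lt_of_le h2i with he | hlt
    · have hC : Nat.choose (n-i) (i+1) = 0 := Nat.choose_eq_zero_of_lt (by omega)
      rw [show n+2-2*(i+1) = 0 by omega, show n+1-2*(i+1) = 0 by omega,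
        show n-2*i = 0 by omega, hC]
      rw [hC] at hc
      push_cast at hc ⊢
      linear_combination ((-a) ^ (i+1)) * hc
    · obtain ⟨j, hj⟩ : ∃ j, n = 2*i+1+j := ⟨n-2*i-1, by omega⟩
      rw [show n+2-2*(i+1) = j+1 by omega, show n+1-2*(i+1) = j by omega,
        show n-2*i = j+1 by omega]
      push_cast at hc ⊢
      linear_combination ((-a) ^ (i+1) * x ^ (j+1)) * hc
  · have hA : ((n:ℂ) + 2) ≠ 0 := by
      have e : ((n:ℂ) + 2) = ((n+2:ℕ):ℂ) := by push_cast; ring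
      rw [e]; exact Nat.cast_ne_zero.mpr (by omega)
    have hB : ((n:ℂ) + 1) ≠ 0 := by
      have e : ((n:ℂ) + 1) = ((n+1:ℕ):ℂ) := by push_cast; ring
      rw [e]; exact Nat.cast_ne_zero.mpr (by omega)
    norm_num
    rw [div_self hA, div_self hB, one_mul, one_mul, pow_succ]
    ring

noncomputable def NnAux (k : ℕ) (y a : ℂ) (m : ℕ) : ℂ :=
  (y ^ (2*(m+1)) + a ^ (m+1)) * (y ^ 2 - a) + (k:ℂ) * a * (y ^ (2*(m+1)) - a ^ m * y ^ 2)

noncomputable def FAux (k : ℕ) (y a : ℂ) (m : ℕ) : ℂ := NnAux k y a m / (y ^ (m+1) * (y ^ 2 - a))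

lemma FAux_rec (k : ℕ) (y a : ℂ) (hy : y ≠ 0) (hya : y^2 - a ≠ 0) (m : ℕ) :
    FAux k y a (m+2) = (y + a/y) * FAux k y a (m+1) - a * FAux k y a m := by
  have hD : (y ^ (m+3) * (y ^ 2 - a)) ≠ 0 := mul_ne_zero (pow_ne_zero _ hy) hya
  have hxy : y + a/y = (y^2+a)/y := by field_simp
  have e1 : FAux k y a (m+1) = (y * NnAux k y a (m+1)) / (y ^ (m+3) * (y ^ 2 - a)) := by
    rw [FAux, div_eq_div_iff (mul_ne_zero (pow_ne_zero _ hy) hya) hD]; ring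
  have e0 : FAux k y a m = (y^2 * NnAux k y a m) / (y ^ (m+3) * (y ^ 2 - a)) := by
    rw [FAux, div_eq_div_iff (mul_ne_zero (pow_ne_zero _ hy) hya) hD]; ring
  rw [e1, e0, hxy, FAux]
  simp only [div_mul_div_comm, ← mul_div_assoc, div_mul_eq_mul_div, div_div]
  rw [div_sub_div _ _ (mul_ne_zero hy hD) hD,
    div_eq_div_iff (mul_ne_zero (pow_ne_zero _ hy) hya) (mul_ne_zero (mul_ne_zero hy hD) hD)]
  simp only [NnAux]
  ring

lemma FAux_eq (k : ℕ) (y a : ℂ) (hy : y ≠ 0) (hya : y^2 - a ≠ 0) (m : ℕ) :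
    FAux k y a m = (y ^ (2*(m+1)) + a ^ (m+1)) / y ^ (m+1) +
      ((k:ℂ) * a / y ^ (m+1)) * ((y ^ (2*(m+1)) - a ^ m * y ^ 2) / (y ^ 2 - a)) := by
  rw [FAux, NnAux, div_mul_div_comm,
    div_add_div _ _ (pow_ne_zero _ hy) (mul_ne_zero (pow_ne_zero _ hy) hya),
    div_eq_div_iff (mul_ne_zero (pow_ne_zero _ hy) hya)
      (mul_ne_zero (pow_ne_zero _ hy) (mul_ne_zero (pow_ne_zero _ hy) hya))]
  ring

lemma dicksonKind_one (k : ℕ) (x a : ℂ) : dicksonKind k 1 x a = x := by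
  simp [dicksonKind]

lemma dicksonKind_two (k : ℕ) (x a : ℂ) :
    dicksonKind k 2 x a = x^2 + ((2:ℂ) - (k:ℂ)) * (-a) := by
  rw [dicksonKind]
  norm_num [Finset.sum_range_succ]

lemma FAux_zero (k : ℕ) (y a : ℂ) (hy : y ≠ 0) (hya : y^2 - a ≠ 0) :
    FAux k y a 0 = y + a/y := by
  rw [FAux, NnAux, div_eq_iff (mul_ne_zero (pow_ne_zero _ hy) hya)]
  field_simp
  ring

lemma FAux_one (k : ℕ) (y a : ℂ) (hy : y ≠ 0) (hya : y^2 - a ≠ 0) :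
    FAux k y a 1 = (y + a/y)^2 + ((2:ℂ) - (k:ℂ)) * (-a) := by
  rw [FAux, NnAux, div_eq_iff (mul_ne_zero (pow_ne_zero _ hy) hya)]
  field_simp
  ring

theorem dicksonKind_functional_eq (k : ℕ) (n : ℕ) (hn : 1 ≤ n) (y a : ℂ)
    (hy : y ≠ 0) (hya : y ^ 2 ≠ a) :
    dicksonKind k n (y + a / y) a =
      (y ^ (2 * n) + a ^ n) / y ^ n +
        ((k : ℂ) * a / y ^ n) * ((y ^ (2 * n) - a ^ (n - 1) * y ^ 2) / (y ^ 2 - a)) := by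
  have hya' : y ^ 2 - a ≠ 0 := sub_ne_zero.mpr hya
  obtain ⟨m, rfl⟩ : ∃ m, n = m + 1 := ⟨n - 1, by omega⟩
  have key : ∀ m : ℕ, dicksonKind k (m+1) (y + a/y) a = FAux k y a m ∧
      dicksonKind k (m+2) (y + a/y) a = FAux k y a (m+1) := by
    intro m
    induction m with
    | zero =>
      constructor
      · rw [dicksonKind_one, FAux_zero k y a hy hya']
      · rw [dicksonKind_two, FAux_one k y a hy hya']
    | succ p ih =>
      refine ⟨ih.2, ?_⟩
      have hrec := dickson_rec k (y + a/y) a (p+1) (by omega)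
      have hfrec := FAux_rec k y a hy hya' p
      rw [show p+1+2 = p+3 from rfl] at hrec
      rw [show p+1+1+1 = p+3 from rfl, hrec, ih.1, ih.2, show p+1+1 = p+2 from rfl, hfrec]
  rw [(key m).1, FAux_eq k y a hy hya' m]
  simp only [Nat.add_sub_cancel]
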